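/- A quasi generalized CR-lightlike submanifold whose radical distribution splits as Rad TM = D₁ ⊕ D₂ with φD₁ = D₁ and φD₂ ⊂ S(TM), with D₁ ≠ 0, has dim(Rad TM) ≥ 3. -/
import Mathlib


/-- If `W` is a totally null subspace with `W = D₁ ⊕ D₂`, `φ D₁ = D₁`, `η|_{D₁} = 0`,
`D₁ ≠ 0` and `D₂ ≠ 0`, then `dim W ≥ 3`. -/
theorem stmt_12 {V : Type*} [AddCommGroup V] [Module ℝ V] [FiniteDimensional ℝ V]
    (g : LinearMap.BilinForm ℝ V) (hnd : g.Nondegenerate) (hsym : g.IsSymm)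
    (φ : V →ₗ[ℝ] V) (ξ : V) (η : V →ₗ[ℝ] ℝ)
    (h1 : ∀ X : V, φ (φ X) = -X + η X • ξ)
    (h2 : η ξ = 1)
    (h3 : ∀ X : V, η (φ X) = 0)
    (h4 : φ ξ = 0)
    (hcompat : ∀ X Y : V, g (φ X) (φ Y) = g X Y - η X * η Y)
    (hη : ∀ X : V, η X = g ξ X)
    (W D₁ D₂ : Submodule ℝ V)
    (hnull : ∀ x ∈ W, ∀ y ∈ W, g x y = 0)
    (hsum : D₁ ⊔ D₂ = W)
    (hdisj : D₁ ⊓ D₂ = ⊥)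
    (hφD₁ : D₁.map φ = D₁)
    (hηD₁ : ∀ x ∈ D₁, η x = 0)
    (hD₁ : D₁ ≠ ⊥)
    (hD₂ : D₂ ≠ ⊥) :
    3 ≤ Module.finrank ℝ W := by
  have hφmem : ∀ x ∈ D₁, φ x ∈ D₁ := fun x hx => hφD₁ ▸ Submodule.mem_map_of_mem hx
  set J : D₁ →ₗ[ℝ] D₁ := φ.restrict hφmem with hJ
  have hJJ : J ∘ₗ J = -LinearMap.id := by
    ext x
    have hx0 : η (x : V) = 0 := hηD₁ x.1 x.2
    simp [hJ, LinearMap.restrict_apply, h1, hx0]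
  have hdet : (LinearMap.det J) ^ 2 = (-1 : ℝ) ^ (Module.finrank ℝ D₁) := by
    rw [sq, ← LinearMap.det_comp, hJJ]
    have : (-LinearMap.id : D₁ →ₗ[ℝ] D₁) = (-1 : ℝ) • LinearMap.id := by
      ext x; simp
    rw [this, LinearMap.det_smul]
    simp
  have heven : Even (Module.finrank ℝ D₁) := by
    rcases Nat.even_or_odd (Module.finrank ℝ D₁) with h | h
    · exact h
    · exfalso
      rw [h.neg_one_pow] at hdet
      nlinarith [sq_nonneg (LinearMap.det J)]
  have hpos1 : 0 < Module.finrank ℝ D₁ := by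
    rw [Module.finrank_pos_iff]
    exact Submodule.nontrivial_iff_ne_bot.mpr hD₁
  have h2le : 2 ≤ Module.finrank ℝ D₁ := by
    rcases heven with ⟨k, hk⟩
    omega
  have hpos2 : 0 < Module.finrank ℝ D₂ := by
    rw [Module.finrank_pos_iff]
    exact Submodule.nontrivial_iff_ne_bot.mpr hD₂
  have hrank := Submodule.finrank_sup_add_finrank_inf_eq D₁ D₂
  rw [hsum, hdisj] at hrank
  simp [finrank_bot] at hrank
  omega
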